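/- Let G = (V,E) be a finite simple graph with star number γ(G) = k, let v ∈ V, and let X be a nonempty finite set of new vertices disjoint from V. Let G' be the graph on V ∪ X whose edges are the edges of G together with all edges xu for x ∈ X and u ∈ N_G(v), where N_G(v) is the neighborhood of v in G (so that the vertices of {v} ∪ X are pairwise false twins in G'). Then γ(G') ≤ k + 1. -/

import Mathlib

open SimpleGraph

/-- A `k`-witness for a simple graph `G`: a positive weight function `w` on the vertices
together with `k` increasingly ordered intervals `[a i, b i]` of positive reals such that
two distinct vertices are adjacent iff the sum of their weights lies in ⋃ i, [a i, b i]. -/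
structure StarWitness {V : Type*} (G : SimpleGraph V) (k : ℕ) where
  w : V → ℝ
  a : Fin k → ℝ
  b : Fin k → ℝ
  w_pos : ∀ v, 0 < w v
  a_pos : ∀ i, 0 < a i
  a_le_b : ∀ i, a i ≤ b i
  ordered : ∀ i j : Fin k, i < j → b i < a j
  adj_iff : ∀ u v : V, u ≠ v →
    (G.Adj u v ↔ ∃ i : Fin k, a i ≤ w u + w v ∧ w u + w v ≤ b i)

/-- The star number `γ(G)` of a graph `G`: the smallest positive integer `k` such that
`G` admits a `k`-witness (i.e. `G` is a star-`k`-PCG). -/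
noncomputable def starNumber {V : Type*} (G : SimpleGraph V) : ℕ :=
  sInf {k | 0 < k ∧ Nonempty (StarWitness G k)}

/-- A witness is left-free if the weight of every non-edge exceeds `b 1` (the right endpoint
of the first interval). -/
def StarWitness.LeftFree {V : Type*} {G : SimpleGraph V} {k : ℕ}
    (W : StarWitness G k) : Prop :=
  ∀ u v : V, u ≠ v → ¬ G.Adj u v → ∀ i : Fin k, (i : ℕ) = 0 → W.b i < W.w u + W.w v

/-- A witness is right-free if the weight of every non-edge is below `a k` (the left endpoint
of the last interval). -/
def StarWitness.RightFree {V : Type*} {G : SimpleGraph V} {k : ℕ}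
    (W : StarWitness G k) : Prop :=
  ∀ u v : V, u ≠ v → ¬ G.Adj u v → ∀ i : Fin k, (i : ℕ) = k - 1 → W.w u + W.w v < W.a i

/-- A witness is in normal form if all weights are pairwise distinct and no doubled weight
equals the sum of the weights of two distinct vertices. -/
def StarWitness.NormalForm {V : Type*} {G : SimpleGraph V} {k : ℕ}
    (W : StarWitness G k) : Prop :=
  Function.Injective W.w ∧
    ∀ x u₁ u₂ : V, u₁ ≠ u₂ → 2 * W.w x ≠ W.w u₁ + W.w u₂

/-- The graph obtained from `G` by adding the vertices of `X` as false twins of `v`: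
each new vertex is adjacent exactly to the neighbors of `v` in `G`. -/
def addFalseTwins {V : Type*} (X : Type*) (G : SimpleGraph V) (v : V) :
    SimpleGraph (V ⊕ X) where
  Adj a b :=
    match a, b with
    | Sum.inl u₁, Sum.inl u₂ => G.Adj u₁ u₂
    | Sum.inl u, Sum.inr _ => G.Adj v u
    | Sum.inr _, Sum.inl u => G.Adj v u
    | Sum.inr _, Sum.inr _ => False
  symm := by
    constructor
    rintro (u | x) (u' | y) h
    · exact h.symm
    · exact h
    · exact h
    · exact h
  loopless := by
    constructor
    rintro (u | x) h
    · exact G.irrefl h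
    · exact h

/-!
Start from a `k`-witness of `G` and perturb the weight of `v` so that `2 w(v)` is not the sum
of the weights of two distinct vertices; every non-edge sum keeps a positive distance from the
intervals, so a small perturbation (with slightly enlarged intervals) stays a witness. Giving
every new vertex the weight of `v` then creates exactly one new sum, `2 w(v)`, which must avoid
the intervals. Since `2 w(v)` is isolated from all other sums, cutting a small open gap around
it out of the intervals changes no other adjacency and splits at most one interval into two,
hence `k + 1` intervals suffice.
-/

open Filter Topology

theorem Set.Finite.exists_pos_add_lt {S : Set ℝ} (hS : S.Finite) :
    ∃ m > 0, ∀ x ∈ S, ∀ y ∈ S, x < y → x + m < y := by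
  have h : ∀ᶠ m in 𝓝[>] (0 : ℝ), ∀ x ∈ S, ∀ y ∈ S, x < y → x + m < y := by
    refine hS.eventually_all.2 fun x _ => hS.eventually_all.2 fun y _ => ?_
    by_cases hxy : x < y
    · filter_upwards [nhdsWithin_le_nhds (eventually_lt_nhds (sub_pos.2 hxy))] with m hm _
      linarith
    · exact Eventually.of_forall fun _ h => absurd h hxy
  exact (h.and self_mem_nhdsWithin).exists.imp fun m hm => ⟨hm.2, hm.1⟩

structure IsIntervalFamily (P : Finset (ℝ × ℝ)) : Prop where
  pos : ∀ p ∈ P, 0 < p.1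
  le : ∀ p ∈ P, p.1 ≤ p.2
  pairwiseDisjoint : (P : Set (ℝ × ℝ)).PairwiseDisjoint fun p => Set.Icc p.1 p.2

def intervalUnion (P : Finset (ℝ × ℝ)) : Set ℝ := ⋃ p ∈ P, Set.Icc p.1 p.2

theorem mem_intervalUnion {P : Finset (ℝ × ℝ)} {s : ℝ} :
    s ∈ intervalUnion P ↔ ∃ p ∈ P, p.1 ≤ s ∧ s ≤ p.2 := by
  simp only [intervalUnion, Set.mem_iUnion, Set.mem_Icc, exists_prop]

noncomputable def diffIoo (P : Finset (ℝ × ℝ)) (c d : ℝ) : Finset (ℝ × ℝ) :=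
  (P.filter (·.1 ≤ c)).image (fun p => (p.1, min p.2 c)) ∪
    (P.filter (d ≤ ·.2)).image (fun p => (max p.1 d, p.2))

theorem intervalUnion_diffIoo (P : Finset (ℝ × ℝ)) (c d : ℝ) :
    intervalUnion (diffIoo P c d) = intervalUnion P \ Set.Ioo c d := by
  ext s
  simp only [diffIoo, mem_intervalUnion, Set.mem_sdiff, Set.mem_Ioo, Finset.mem_union,
    Finset.mem_image, Finset.mem_filter, not_and_or, not_lt]
  constructor
  · rintro ⟨_, (⟨p, ⟨hp, -⟩, rfl⟩ | ⟨p, ⟨hp, -⟩, rfl⟩), h1, h2⟩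
    · exact ⟨⟨p, hp, h1, h2.trans (min_le_left _ _)⟩, Or.inl (h2.trans (min_le_right _ _))⟩
    · exact ⟨⟨p, hp, (le_max_left _ _).trans h1, h2⟩, Or.inr ((le_max_right _ _).trans h1)⟩
  · rintro ⟨⟨p, hp, h1, h2⟩, hsc | hsd⟩
    · exact ⟨_, Or.inl ⟨p, ⟨hp, h1.trans hsc⟩, rfl⟩, h1, le_min h2 hsc⟩
    · exact ⟨_, Or.inr ⟨p, ⟨hp, hsd.trans h2⟩, rfl⟩, max_le h1 hsd, h2⟩

namespace IsIntervalFamily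

variable {P : Finset (ℝ × ℝ)}

theorem diffIoo (hP : IsIntervalFamily P) {c d : ℝ} (hcd : c < d) :
    IsIntervalFamily (diffIoo P c d) := by
  have hmem : ∀ q ∈ _root_.diffIoo P c d, ∃ p ∈ P, p.1 ≤ q.1 ∧ q.1 ≤ q.2 := by
    simp only [_root_.diffIoo, Finset.mem_union, Finset.mem_image, Finset.mem_filter]
    rintro q (⟨p, ⟨hp, hpc⟩, rfl⟩ | ⟨p, ⟨hp, hpd⟩, rfl⟩)
    · exact ⟨p, hp, le_rfl, le_min (hP.le p hp) hpc⟩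
    · exact ⟨p, hp, le_max_left _ _, max_le (hP.le p hp) hpd⟩
  refine ⟨fun q hq => ?_, fun q hq => (hmem q hq).choose_spec.2.2, ?_⟩
  · obtain ⟨p, hp, h1, -⟩ := hmem q hq
    exact (hP.pos p hp).trans_le h1
  have hsub : ∀ p : ℝ × ℝ, Set.Icc p.1 (min p.2 c) ⊆ Set.Icc p.1 p.2 ∧
      Set.Icc (max p.1 d) p.2 ⊆ Set.Icc p.1 p.2 := fun p =>
    ⟨Set.Icc_subset_Icc le_rfl (min_le_left _ _), Set.Icc_subset_Icc (le_max_left _ _) le_rfl⟩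
  rw [_root_.diffIoo, Finset.coe_union, Finset.coe_image, Finset.coe_image]
  refine Set.PairwiseDisjoint.union
    ((hP.pairwiseDisjoint.subset fun p hp => (Finset.mem_filter.1 hp).1).image_of_le
      fun p => (hsub p).1)
    ((hP.pairwiseDisjoint.subset fun p hp => (Finset.mem_filter.1 hp).1).image_of_le
      fun p => (hsub p).2) ?_
  rintro _ ⟨p, hp, rfl⟩ _ ⟨q, hq, rfl⟩ -
  rcases eq_or_ne p q with rfl | hpq
  · refine Set.disjoint_left.2 fun s hs hs' => ?_
    linarith [hs.2, hs'.1, min_le_right p.2 c, le_max_right p.1 d]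
  · exact (hP.pairwiseDisjoint (Finset.mem_filter.1 hp).1 (Finset.mem_filter.1 hq).1 hpq).mono
      (hsub p).1 (hsub q).2

theorem card_diffIoo_le (hP : IsIntervalFamily P) {c d : ℝ} (hcd : c < d) :
    (_root_.diffIoo P c d).card ≤ P.card + 1 := by
  classical
  set F₁ := P.filter (·.1 ≤ c)
  set F₂ := P.filter (d ≤ ·.2)
  -- only one interval of `P` can contain `[c, d]`
  have hinter : (F₁ ∩ F₂).card ≤ 1 := by
    refine Finset.card_le_one.2 fun p hp q hq => ?_
    simp only [Finset.mem_inter, Finset.mem_filter, F₁, F₂] at hp hq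
    exact hP.pairwiseDisjoint.elim hp.1.1 hq.1.1 <| Set.not_disjoint_iff.2
      ⟨c, ⟨hp.1.2, by linarith [hp.2.2]⟩, hq.1.2, by linarith [hq.2.2]⟩
  calc (_root_.diffIoo P c d).card
      ≤ F₁.card + F₂.card :=
        (Finset.card_union_le _ _).trans (add_le_add Finset.card_image_le Finset.card_image_le)
    _ = (F₁ ∪ F₂).card + (F₁ ∩ F₂).card := (Finset.card_union_add_card_inter _ _).symm
    _ ≤ P.card + 1 := add_le_add
        (Finset.card_le_card (Finset.union_subset (Finset.filter_subset _ _)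
          (Finset.filter_subset _ _))) hinter

theorem exists_enum (hP : IsIntervalFamily P) :
    ∃ I : Fin P.card → ℝ × ℝ, (∀ j, I j ∈ P) ∧ (∀ p ∈ P, ∃ j, I j = p) ∧
      ∀ i j, i < j → (I i).2 < (I j).1 := by
  let Q : Finset (ℝ ×ₗ ℝ) := P.map toLex.toEmbedding
  have hQ : Q.card = P.card := Finset.card_map _
  let e := Q.orderEmbOfFin hQ
  have hmem : ∀ j, ofLex (e j) ∈ P := fun j => by
    simpa [Q, Finset.mem_map_equiv] using Q.orderEmbOfFin_mem hQ j
  refine ⟨fun j => ofLex (e j), hmem, fun p hp => ?_, fun i j hij => ?_⟩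
  · have : toLex p ∈ Set.range e := by
      rw [Finset.range_orderEmbOfFin]
      simpa [Q, Finset.mem_map_equiv] using hp
    obtain ⟨j, hj⟩ := this
    exact ⟨j, by simp [hj]⟩
  · have hlt : e i < e j := e.strictMono hij
    have hfst : (ofLex (e i)).1 ≤ (ofLex (e j)).1 :=
      (Prod.Lex.lt_iff.1 hlt).elim le_of_lt (·.1.le)
    by_contra! hle
    have hij' : ofLex (e i) = ofLex (e j) :=
      hP.pairwiseDisjoint.elim (hmem i) (hmem j) <| Set.not_disjoint_iff.2
        ⟨(ofLex (e j)).1, ⟨hfst, hle⟩, le_rfl, hP.le _ (hmem j)⟩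
    exact hlt.ne (by simpa using hij')

theorem exists_padded_enum (hP : IsIntervalFamily P) (M : ℝ) :
    ∃ J : ℕ → ℝ × ℝ, (∀ j, 0 < (J j).1 ∧ (J j).1 ≤ (J j).2) ∧
      (∀ i j, i < j → (J i).2 < (J j).1) ∧ (∀ j < P.card, J j ∈ P) ∧
      (∀ p ∈ P, ∃ j < P.card, J j = p) ∧ ∀ j, P.card ≤ j → M < (J j).1 := by
  obtain ⟨I, hImem, hIsurj, hIord⟩ := hP.exists_enum
  obtain ⟨B, hB⟩ := (P.image Prod.snd).bddAbove
  set U := max (max M B) 0 + 1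
  have hU : M < U ∧ B < U ∧ 0 < U := by grind
  have hPU : ∀ p ∈ P, p.2 < U := fun p hp =>
    (hB (Finset.mem_coe.2 (Finset.mem_image_of_mem _ hp))).trans_lt hU.2.1
  let J : ℕ → ℝ × ℝ := fun j => if h : j < P.card then I ⟨j, h⟩ else (U + j, U + j)
  have hJlt : ∀ j (h : j < P.card), J j = I ⟨j, h⟩ := fun j h => dif_pos h
  have hJge : ∀ j, P.card ≤ j → J j = (U + j, U + j) := fun j h => dif_neg h.not_gt
  refine ⟨J, fun j => ?_, fun i j hij => ?_, fun j hj => hJlt j hj ▸ hImem _, fun p hp => ?_,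
    fun j hj => by rw [hJge j hj]; linarith [hU.1, (Nat.cast_nonneg j : (0 : ℝ) ≤ j)]⟩
  · rcases lt_or_ge j P.card with h | h
    · rw [hJlt j h]; exact ⟨hP.pos _ (hImem _), hP.le _ (hImem _)⟩
    · rw [hJge j h]; exact ⟨by positivity [hU.2.2], le_rfl⟩
  · rcases lt_or_ge j P.card with hj | hj
    · rw [hJlt i (hij.trans hj), hJlt j hj]; exact hIord _ _ hij
    rw [hJge j hj]
    rcases lt_or_ge i P.card with hi | hi
    · rw [hJlt i hi]
      linarith [hPU _ (hImem ⟨i, hi⟩), (Nat.cast_nonneg j : (0 : ℝ) ≤ j)]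
    · rw [hJge i hi]
      linarith [(Nat.cast_lt.2 hij : (i : ℝ) < j)]
  · obtain ⟨j, rfl⟩ := hIsurj p hp
    exact ⟨j, j.2, hJlt j j.2⟩

end IsIntervalFamily

theorem exists_starWitness_of_intervalUnion {V : Type*} {G : SimpleGraph V}
    {P : Finset (ℝ × ℝ)} (hP : IsIntervalFamily P) {w : V → ℝ} (hw : ∀ u, 0 < w u)
    {M : ℝ} (hM : ∀ u u', w u + w u' ≤ M)
    (hadj : ∀ u u', u ≠ u' → (G.Adj u u' ↔ w u + w u' ∈ intervalUnion P))
    {K : ℕ} (hK : P.card ≤ K) :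
    ∃ W : StarWitness G K, W.w = w ∧
      ∀ s ≤ M, (∃ i, W.a i ≤ s ∧ s ≤ W.b i) ↔ s ∈ intervalUnion P := by
  obtain ⟨J, hJ, hJord, hJmem, hJsurj, hJbig⟩ := hP.exists_padded_enum M
  have hcover :
      ∀ s ≤ M, (∃ i : Fin K, (J i).1 ≤ s ∧ s ≤ (J i).2) ↔ s ∈ intervalUnion P := by
    intro s hs
    rw [mem_intervalUnion]
    constructor
    · rintro ⟨i, h1, h2⟩
      rcases lt_or_ge (i : ℕ) P.card with h | h
      · exact ⟨_, hJmem i h, h1, h2⟩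
      · linarith [hJbig i h]
    · rintro ⟨p, hp, h1, h2⟩
      obtain ⟨j, hj, rfl⟩ := hJsurj p hp
      exact ⟨⟨j, hj.trans_le hK⟩, h1, h2⟩
  exact ⟨⟨w, fun i => (J i).1, fun i => (J i).2, hw, fun i => (hJ i).1, fun i => (hJ i).2,
    fun i j hij => hJord i j hij,
    fun u u' hne => (hadj u u' hne).trans (hcover _ (hM u u')).symm⟩, rfl, hcover⟩

namespace StarWitness

variable {V : Type*} {G : SimpleGraph V} {k : ℕ}

noncomputable def intervals (W : StarWitness G k) : Finset (ℝ × ℝ) :=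
  Finset.univ.image fun i => (W.a i, W.b i)

theorem mem_intervalUnion_intervals (W : StarWitness G k) {s : ℝ} :
    s ∈ intervalUnion W.intervals ↔ ∃ i, W.a i ≤ s ∧ s ≤ W.b i := by
  simp [mem_intervalUnion, intervals]

theorem card_intervals_le (W : StarWitness G k) : W.intervals.card ≤ k :=
  Finset.card_image_le.trans (Finset.card_fin k).le

theorem isIntervalFamily_intervals (W : StarWitness G k) : IsIntervalFamily W.intervals where
  pos := by simp [intervals, W.a_pos]
  le := by simp [intervals, W.a_le_b]
  pairwiseDisjoint := by
    simp only [intervals, Finset.coe_image, Finset.coe_univ, Set.image_univ]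
    rintro _ ⟨i, rfl⟩ _ ⟨j, rfl⟩ hne
    have hij : i ≠ j := fun h => hne (h ▸ rfl)
    refine Set.disjoint_left.2 fun s hi hj => ?_
    rcases hij.lt_or_gt with h | h
    · linarith [W.ordered i j h, hi.2, hj.1]
    · linarith [W.ordered j i h, hi.1, hj.2]

theorem adj_iff_mem (W : StarWitness G k) {u u' : V} (h : u ≠ u') :
    G.Adj u u' ↔ W.w u + W.w u' ∈ intervalUnion W.intervals :=
  (W.adj_iff u u' h).trans W.mem_intervalUnion_intervals.symm

theorem exists_pos_forall_exists_w_eq [Finite V] (W : StarWitness G k) :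
    ∃ m > 0, ∀ w' : V → ℝ, (∀ u, W.w u ≤ w' u ∧ w' u ≤ W.w u + m / 2) →
      ∃ W' : StarWitness G k, W'.w = w' := by
  have hS : (Set.range W.a ∪ Set.range W.b ∪
      Set.range fun p : V × V => W.w p.1 + W.w p.2).Finite :=
    ((Set.finite_range _).union (Set.finite_range _)).union (Set.finite_range _)
  obtain ⟨m, hm, hgap⟩ := hS.exists_pos_add_lt
  refine ⟨m, hm, fun w' hw' => ?_⟩
  have hsum : ∀ u u', W.w u + W.w u' ≤ w' u + w' u' ∧ w' u + w' u' ≤ W.w u + W.w u' + m :=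
    fun u u' => by constructor <;> linarith [hw' u, hw' u']
  -- a non-edge sum lies more than `m` away from every interval, so it survives the shift
  have hnon : ∀ u u', u ≠ u' → ¬ G.Adj u u' → ∀ i,
      ¬ (W.a i ≤ w' u + w' u' ∧ w' u + w' u' ≤ W.b i + m) := by
    intro u u' hne hnadj i ⟨h1, h2⟩
    have hsS : W.w u + W.w u' ∈ Set.range W.a ∪ Set.range W.b ∪
        Set.range fun p : V × V => W.w p.1 + W.w p.2 := Or.inr ⟨(u, u'), rfl⟩
    rcases lt_or_ge (W.w u + W.w u') (W.a i) with ha | ha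
    · linarith [hgap _ hsS _ (Or.inl (Or.inl ⟨i, rfl⟩)) ha, hsum u u']
    rcases le_or_gt (W.w u + W.w u') (W.b i) with hb | hb
    · exact hnadj ((W.adj_iff u u' hne).2 ⟨i, ha, hb⟩)
    · linarith [hgap _ (Or.inl (Or.inr ⟨i, rfl⟩)) _ hsS hb, hsum u u']
  refine ⟨⟨w', W.a, fun i => W.b i + m, fun u => (W.w_pos u).trans_le (hw' u).1, W.a_pos,
    fun i => by linarith [W.a_le_b i], fun i j hij => ?_, fun u u' hne => ?_⟩, rfl⟩
  · exact hgap _ (Or.inl (Or.inr ⟨i, rfl⟩)) _ (Or.inl (Or.inl ⟨j, rfl⟩))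
      (W.ordered i j hij)
  · refine ⟨fun hadj => ?_, fun ⟨i, hi⟩ => by_contra fun hnadj => hnon u u' hne hnadj i hi⟩
    obtain ⟨i, h1, h2⟩ := (W.adj_iff u u' hne).1 hadj
    exact ⟨i, h1.trans (hsum u u').1, by linarith [hsum u u']⟩

theorem exists_forall_add_ne_two_mul [Finite V] (W : StarWitness G k) (v : V) :
    ∃ W' : StarWitness G k, ∀ u u', u ≠ u' → W'.w u + W'.w u' ≠ 2 * W'.w v := by
  classical
  obtain ⟨m, hm, hW⟩ := W.exists_pos_forall_exists_w_eq
  let B : Set ℝ := Set.range fun p : V × V => (W.w p.1 + W.w p.2) / 2 - W.w v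
  obtain ⟨δ, ⟨hδ0, hδm⟩, hδB⟩ :=
    ((Set.Ioo_infinite (half_pos hm)).sdiff (Set.finite_range _ : B.Finite)).nonempty
  obtain ⟨W', hW'⟩ := hW (Function.update W.w v (W.w v + δ)) fun u => by
    rcases eq_or_ne u v with rfl | hu
    · simp only [Function.update_self]; constructor <;> linarith
    · rw [Function.update_of_ne hu]; constructor <;> linarith
  refine ⟨W', fun u u' hne heq => hδB ?_⟩
  simp only [hW'] at heq
  rcases eq_or_ne u v with rfl | hu
  · refine ⟨(u', u'), ?_⟩
    simp only [Function.update_self, Function.update_of_ne hne.symm] at heq ⊢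
    linarith
  rcases eq_or_ne u' v with rfl | hu'
  · refine ⟨(u, u), ?_⟩
    simp only [Function.update_self, Function.update_of_ne hne] at heq ⊢
    linarith
  · refine ⟨(u, u'), ?_⟩
    simp only [Function.update_self, Function.update_of_ne hu, Function.update_of_ne hu'] at heq ⊢
    linarith

theorem exists_succ_notMem_intervalUnion [Finite V] (W : StarWitness G k) {c : ℝ}
    (hc : ∀ u u', u ≠ u' → W.w u + W.w u' ≠ c) :
    ∃ W' : StarWitness G (k + 1), W'.w = W.w ∧ c ∉ intervalUnion W'.intervals := by
  have hS : (insert c (Set.range fun p : V × V => W.w p.1 + W.w p.2)).Finite :=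
    (Set.finite_range _).insert c
  obtain ⟨ρ, hρ, hgap⟩ := hS.exists_pos_add_lt
  have hfar : ∀ u u', u ≠ u' → W.w u + W.w u' ∉ Set.Ioo (c - ρ) (c + ρ) := by
    intro u u' hne ⟨h1, h2⟩
    have hs : W.w u + W.w u' ∈ insert c (Set.range fun p : V × V => W.w p.1 + W.w p.2) :=
      Or.inr ⟨(u, u'), rfl⟩
    rcases (hc u u' hne).lt_or_gt with h | h
    · linarith [hgap _ hs _ (Set.mem_insert c _) h]
    · linarith [hgap _ (Set.mem_insert c _) _ hs h]
  have hcd : c - ρ < c + ρ := by linarith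
  have hunion := intervalUnion_diffIoo W.intervals (c - ρ) (c + ρ)
  obtain ⟨B, hB⟩ := (Set.finite_range W.w).bddAbove
  have hwB : ∀ u, W.w u ≤ B := fun u => hB ⟨u, rfl⟩
  obtain ⟨W', hw, hW'⟩ :=
    exists_starWitness_of_intervalUnion (W.isIntervalFamily_intervals.diffIoo hcd) W.w_pos
    (M := max c (B + B)) (fun u u' => le_max_of_le_right (add_le_add (hwB u) (hwB u')))
    (fun u u' hne => by
      rw [hunion, W.adj_iff_mem hne]
      exact ⟨fun h => ⟨h, hfar u u' hne⟩, And.left⟩)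
    ((W.isIntervalFamily_intervals.card_diffIoo_le hcd).trans
      (Nat.add_le_add_right W.card_intervals_le 1))
  refine ⟨W', hw, fun h => ?_⟩
  have := ((hW' c (le_max_left _ _)).1 (W'.mem_intervalUnion_intervals.1 h))
  rw [hunion] at this
  exact this.2 ⟨by linarith, by linarith⟩

def toAddFalseTwins (W : StarWitness G k) (v : V) (hv : 2 * W.w v ∉ intervalUnion W.intervals)
    (X : Type*) : StarWitness (addFalseTwins X G v) k where
  w := Sum.elim W.w fun _ => W.w v
  a := W.a
  b := W.b
  w_pos := by rintro (u | x) <;> exact W.w_pos _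
  a_pos := W.a_pos
  a_le_b := W.a_le_b
  ordered := W.ordered
  adj_iff := by
    have hv' : ∀ s, s = 2 * W.w v → ¬ ∃ i, W.a i ≤ s ∧ s ≤ W.b i := by
      rintro _ rfl; rwa [← W.mem_intervalUnion_intervals]
    rintro (u | x) (u' | x') hne
    · exact W.adj_iff u u' fun h => hne (h ▸ rfl)
    · change G.Adj v u ↔ ∃ i, W.a i ≤ W.w u + W.w v ∧ W.w u + W.w v ≤ W.b i
      rcases eq_or_ne u v with rfl | hu
      · exact iff_of_false (G.loopless.irrefl u) (hv' _ (two_mul _).symm)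
      · rw [add_comm]; exact W.adj_iff v u hu.symm
    · change G.Adj v u' ↔ ∃ i, W.a i ≤ W.w v + W.w u' ∧ W.w v + W.w u' ≤ W.b i
      rcases eq_or_ne u' v with rfl | hu
      · exact iff_of_false (G.loopless.irrefl u') (hv' _ (two_mul _).symm)
      · exact W.adj_iff v u' hu.symm
    · exact iff_of_false id (hv' _ (two_mul _).symm)

end StarWitness

theorem two_pow_add_two_pow_inj {a b c d : ℕ} (hab : a ≠ b) (hcd : c ≠ d)
    (h : (2 : ℝ) ^ a + 2 ^ b = 2 ^ c + 2 ^ d) : a = c ∧ b = d ∨ a = d ∧ b = c := by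
  have hsum : ∑ i ∈ {a, b}, 2 ^ i = ∑ i ∈ {c, d}, 2 ^ i := by
    rw [Finset.sum_pair hab, Finset.sum_pair hcd]
    exact_mod_cast h
  have := congrArg ((↑) : Finset ℕ → Set ℕ) (Finset.geomSum_injective le_rfl hsum)
  simpa [Set.pair_eq_pair_iff] using this

theorem exists_starWitness {V : Type*} [Finite V] (G : SimpleGraph V) :
    ∃ k, 0 < k ∧ Nonempty (StarWitness G k) := by
  classical
  have := Fintype.ofFinite V
  obtain ⟨n, hn⟩ := exists_injective_nat V
  let w : V → ℝ := fun u => 2 ^ n u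
  have hsum : ∀ ⦃u u' x x' : V⦄, u ≠ u' → x ≠ x' → w u + w u' = w x + w x' →
      (u = x ∧ u' = x') ∨ (u = x' ∧ u' = x) := fun u u' x x' h h' heq => by
    simpa only [hn.eq_iff] using two_pow_add_two_pow_inj (hn.ne h) (hn.ne h') heq
  -- one degenerate interval per edge sum, which determines the edge since `w` is a Sidon set
  let P : Finset (ℝ × ℝ) :=
    ((Finset.univ : Finset (V × V)).filter fun p => G.Adj p.1 p.2).image
      fun p => (w p.1 + w p.2, w p.1 + w p.2)
  have hP : IsIntervalFamily P := by
    refine ⟨?_, ?_, ?_⟩ <;> simp only [P, Finset.mem_image, Finset.coe_image]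
    · rintro _ ⟨p, -, rfl⟩; positivity
    · rintro _ ⟨p, -, rfl⟩; exact le_rfl
    · rintro _ ⟨p, -, rfl⟩ _ ⟨q, -, rfl⟩ hne
      refine Set.disjoint_left.2 fun s hp hq => hne ?_
      dsimp only at hp hq ⊢
      rw [show w p.1 + w p.2 = w q.1 + w q.2 by linarith [hp.1, hp.2, hq.1, hq.2]]
  have hadj : ∀ u u', u ≠ u' → (G.Adj u u' ↔ w u + w u' ∈ intervalUnion P) := by
    intro u u' hne
    simp only [mem_intervalUnion, P, Finset.mem_image, Finset.mem_filter, Finset.mem_univ,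
      true_and]
    refine ⟨fun h => ⟨_, ⟨(u, u'), h, rfl⟩, le_rfl, le_rfl⟩, ?_⟩
    rintro ⟨_, ⟨⟨x, x'⟩, hxx', rfl⟩, h1, h2⟩
    rcases hsum hne hxx'.ne (le_antisymm h2 h1) with ⟨rfl, rfl⟩ | ⟨rfl, rfl⟩
    exacts [hxx', hxx'.symm]
  obtain ⟨B, hB⟩ := (Set.finite_range w).bddAbove
  obtain ⟨W, -⟩ := exists_starWitness_of_intervalUnion hP (fun u => by positivity) (M := B + B)
    (fun u u' => add_le_add (hB ⟨u, rfl⟩) (hB ⟨u', rfl⟩)) hadj (Nat.le_succ P.card)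
  exact ⟨_, P.card.succ_pos, ⟨W⟩⟩

theorem starNumber_le {V : Type*} {G : SimpleGraph V} {k : ℕ} (W : StarWitness G k) (hk : 0 < k) :
    starNumber G ≤ k :=
  Nat.sInf_le ⟨hk, ⟨W⟩⟩

theorem nonempty_starWitness_starNumber {V : Type*} [Finite V] (G : SimpleGraph V) :
    Nonempty (StarWitness G (starNumber G)) :=
  (Nat.sInf_mem (exists_starWitness G)).2

theorem stmt_11_general {V X : Type*} [Fintype V]
    (G : SimpleGraph V) (v : V) (k : ℕ)
    (hg : starNumber G = k) :
    starNumber (addFalseTwins X G v) ≤ k + 1 := by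
  obtain ⟨W⟩ := hg ▸ nonempty_starWitness_starNumber G
  obtain ⟨W₁, hW₁⟩ := W.exists_forall_add_ne_two_mul v
  obtain ⟨W₂, hw, hv⟩ := W₁.exists_succ_notMem_intervalUnion hW₁
  exact starNumber_le (W₂.toAddFalseTwins v (hw ▸ hv) X) k.succ_pos

/-- Theorem 11 (false twins): adding to `G` a set `X` of new vertices so that `{v} ∪ X`
is a set of pairwise false twins increases the star number by at most one. -/
theorem stmt_11 {V X : Type*} [Fintype V] [Fintype X] [Nonempty X]
    (G : SimpleGraph V) (v : V) (k : ℕ)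
    (hg : starNumber G = k) :
    starNumber (addFalseTwins X G v) ≤ k + 1 :=
  stmt_11_general G v k hg
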